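/- Let K be a spherical convex body contained in the open upper hemisphere whose spherical polar K* is contained in the open lower hemisphere. If g is the gnomonic projection centered at e_{d+1} and g̃ is the gnomonic projection centered at −e_{d+1}, then the Euclidean polar body of g(K) equals g̃(K*), i.e. g(K)° = g̃(K*). -/

import Mathlib

open Metric Set
noncomputable section

def eLast (d : ℕ) : EuclideanSpace ℝ (Fin (d + 1)) := EuclideanSpace.single (Fin.last d) 1

/-- Open upper hemisphere. -/
def upperHemi (d : ℕ) : Set (EuclideanSpace ℝ (Fin (d + 1))) :=
  {x | x ∈ sphere (0 : EuclideanSpace ℝ (Fin (d + 1))) 1 ∧ 0 < x (Fin.last d)}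

/-- Open lower hemisphere. -/
def lowerHemi (d : ℕ) : Set (EuclideanSpace ℝ (Fin (d + 1))) :=
  {x | x ∈ sphere (0 : EuclideanSpace ℝ (Fin (d + 1))) 1 ∧ x (Fin.last d) < 0}

/-- Gnomonic projection centered at `e_{d+1}`, in coordinates of `ℝ^d = e_{d+1}^⊥`:
`g(x) = x/⟨x,e_{d+1}⟩ − e_{d+1}` has coordinates `x_i/x_{d+1}`. -/
def gproj (d : ℕ) (x : EuclideanSpace ℝ (Fin (d + 1))) : EuclideanSpace ℝ (Fin d) :=
  WithLp.toLp 2 (fun i : Fin d => x i.castSucc / x (Fin.last d))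

/-- Gnomonic projection centered at `−e_{d+1}`, in coordinates of `ℝ^d = e_{d+1}^⊥`:
`g̃(x) = x/⟨x,−e_{d+1}⟩ + e_{d+1}` has coordinates `x_i/(−x_{d+1})`. -/
def gtproj (d : ℕ) (x : EuclideanSpace ℝ (Fin (d + 1))) : EuclideanSpace ℝ (Fin d) :=
  WithLp.toLp 2 (fun i : Fin d => x i.castSucc / (-x (Fin.last d)))

/-- Geodesic segment on the sphere. -/
def sphSeg {d : ℕ} (x y : EuclideanSpace ℝ (Fin (d + 1))) :
    Set (EuclideanSpace ℝ (Fin (d + 1))) :=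
  {z | ∃ a b : ℝ, 0 ≤ a ∧ 0 ≤ b ∧ 0 < a + b ∧ z = ‖a • x + b • y‖⁻¹ • (a • x + b • y)}

/-- Spherical convexity. -/
def SphConvex {d : ℕ} (K : Set (EuclideanSpace ℝ (Fin (d + 1)))) : Prop :=
  ∀ x ∈ K, ∀ y ∈ K, sphSeg x y ⊆ K

/-- The spherical polar body. -/
def sPolar {d : ℕ} (K : Set (EuclideanSpace ℝ (Fin (d + 1)))) :
    Set (EuclideanSpace ℝ (Fin (d + 1))) :=
  {x ∈ sphere (0 : EuclideanSpace ℝ (Fin (d + 1))) 1 | ∀ z ∈ K, (inner ℝ x z : ℝ) ≤ 0}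

/-- The Euclidean polar `L° = {y : ⟨y,x⟩ ≤ 1 ∀ x ∈ L}`. -/
def ePolar {d : ℕ} (L : Set (EuclideanSpace ℝ (Fin d))) : Set (EuclideanSpace ℝ (Fin d)) :=
  {y | ∀ x ∈ L, (inner ℝ x y : ℝ) ≤ 1}

/-! For `x` in the upper and `u` in the lower hemisphere,
`⟨g x, g̃ u⟩ = 1 - ⟨u, x⟩ / (x_{d+1} u_{d+1})` with `x_{d+1} u_{d+1} < 0`, so `⟨g x, g̃ u⟩ ≤ 1`
exactly when `⟨u, x⟩ ≤ 0`. Hence `g̃` maps `K*` into `g(K)°`; conversely every `y ∈ g(K)°` is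
`g̃` of the unit vector `(y, -1) / ‖(y, -1)‖`, which then lies in `K*`. -/

lemma EuclideanSpace.real_inner_eq_sum {ι : Type*} [Fintype ι] (x y : EuclideanSpace ℝ ι) :
    (inner ℝ x y : ℝ) = ∑ i, x i * y i := by
  simp [PiLp.inner_apply, mul_comm]

lemma EuclideanSpace.norm_toLp_snoc {d : ℕ} (y : EuclideanSpace ℝ (Fin d)) (t : ℝ) :
    ‖(WithLp.toLp 2 (Fin.snoc (α := fun _ => ℝ) y t) : EuclideanSpace ℝ (Fin (d + 1)))‖
      = √(‖y‖ ^ 2 + t ^ 2) := by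
  rw [EuclideanSpace.real_norm_sq_eq y, EuclideanSpace.norm_eq]
  simp [Fin.sum_univ_castSucc]

lemma inner_gproj_gtproj {d : ℕ} (x u : EuclideanSpace ℝ (Fin (d + 1)))
    (hx : x (Fin.last d) ≠ 0) (hu : u (Fin.last d) ≠ 0) :
    (inner ℝ (gproj d x) (gtproj d u) : ℝ)
      = 1 - inner ℝ u x / (x (Fin.last d) * u (Fin.last d)) := by
  have summand (i : Fin d) : x i.castSucc / x (Fin.last d) * (u i.castSucc / -u (Fin.last d))
      = u i.castSucc * x i.castSucc / -(x (Fin.last d) * u (Fin.last d)) := by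
    rw [div_mul_div_comm]; ring
  rw [EuclideanSpace.real_inner_eq_sum, EuclideanSpace.real_inner_eq_sum, Fin.sum_univ_castSucc]
  simp only [gproj, gtproj, PiLp.toLp_apply, summand, ← Finset.sum_div]
  field_simp
  ring

lemma inner_gproj_gtproj_le_one_iff {d : ℕ} {x u : EuclideanSpace ℝ (Fin (d + 1))}
    (hx : 0 < x (Fin.last d)) (hu : u (Fin.last d) < 0) :
    (inner ℝ (gproj d x) (gtproj d u) : ℝ) ≤ 1 ↔ (inner ℝ u x : ℝ) ≤ 0 := by
  rw [inner_gproj_gtproj x u hx.ne' hu.ne, sub_le_self_iff,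
    le_div_iff_of_neg (mul_neg_of_pos_of_neg hx hu), zero_mul]

def gtprojInv (d : ℕ) (y : EuclideanSpace ℝ (Fin d)) : EuclideanSpace ℝ (Fin (d + 1)) :=
  (√(‖y‖ ^ 2 + 1))⁻¹ • WithLp.toLp 2 (Fin.snoc (α := fun _ => ℝ) y (-1))

lemma gtprojInv_mem_lowerHemi (d : ℕ) (y : EuclideanSpace ℝ (Fin d)) :
    gtprojInv d y ∈ lowerHemi d := by
  have hs : 0 < √(‖y‖ ^ 2 + 1) := by positivity
  refine ⟨?_, ?_⟩
  · rw [mem_sphere_zero_iff_norm, gtprojInv, norm_smul, EuclideanSpace.norm_toLp_snoc, neg_one_sq,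
      norm_inv, Real.norm_of_nonneg hs.le, inv_mul_cancel₀ hs.ne']
  · simp [gtprojInv, hs]

lemma gtproj_gtprojInv (d : ℕ) (y : EuclideanSpace ℝ (Fin d)) : gtproj d (gtprojInv d y) = y := by
  have hs : √(‖y‖ ^ 2 + 1) ≠ 0 := by positivity
  ext i
  simp only [gtproj, gtprojInv, PiLp.smul_apply, Fin.snoc_castSucc, smul_eq_mul, Fin.snoc_last,
    mul_neg, mul_one, neg_neg, div_inv_eq_mul]
  field_simp

theorem polar_gnomonic_general (d : ℕ) (K : Set (EuclideanSpace ℝ (Fin (d + 1))))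
    (hK : K ⊆ upperHemi d) (hpol : sPolar K ⊆ lowerHemi d) :
    ePolar (gproj d '' K) = gtproj d '' sPolar K := by
  ext y
  constructor
  · intro hy
    have hlift := gtprojInv_mem_lowerHemi d y
    refine ⟨gtprojInv d y, ⟨hlift.1, fun z hz => ?_⟩, gtproj_gtprojInv d y⟩
    rw [← inner_gproj_gtproj_le_one_iff (hK hz).2 hlift.2, gtproj_gtprojInv]
    exact hy _ (mem_image_of_mem _ hz)
  · rintro ⟨u, hu, rfl⟩ _ ⟨x, hx, rfl⟩
    exact (inner_gproj_gtproj_le_one_iff (hK hx).2 (hpol hu).2).2 (hu.2 x hx)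

/-- For a spherical convex body `K` in the open upper hemisphere whose spherical polar lies
in the open lower hemisphere, the Euclidean polar of `g(K)` equals `g̃(K*)`. -/
theorem polar_gnomonic (d : ℕ) (K : Set (EuclideanSpace ℝ (Fin (d + 1))))
    (hK : K ⊆ upperHemi d) (hKc : IsCompact K) (hKne : K.Nonempty) (hKconv : SphConvex K)
    (hpol : sPolar K ⊆ lowerHemi d) :
    ePolar (gproj d '' K) = gtproj d '' sPolar K :=
  polar_gnomonic_general d K hK hpol
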